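/- arXiv:2410.13635 — 6 statements merged into one kernel-verified Lean document; each statement's English description precedes it below -/
import Mathlib

section
/- For every integer r ≥ 0 there exists a constant C > 0, depending only on r, such that for all real numbers a < b and every real polynomial p of degree at most r, one has ∫_a^b p′(t)² dt ≤ C² (b−a)^{−2} ∫_a^b p(t)² dt, i.e. ‖p′‖_{L²(a,b)} ≤ C (b−a)^{−1} ‖p‖_{L²(a,b)}. -/
open Polynomial

/-!
On the finite-dimensional space of polynomials of degree at most `r`, the `L²(0,1)` pairing is
an inner product, so differentiation, being linear, is a bounded operator for it. The affine
change of variables `t ↦ a + (b - a) t` carries `[0,1]` onto `[a,b]`; it scales `∫ p²` by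
`(b - a)⁻¹` and `∫ p'²` by `b - a`, which turns the bound on `[0,1]` into the factor `(b - a)⁻²`.
-/

lemma Polynomial.integral_eval_mul_self_pos {a b : ℝ} (hab : a < b) {p : ℝ[X]} (hp : p ≠ 0) :
    0 < ∫ t in a..b, p.eval t * p.eval t := by
  obtain ⟨c, hc, hroot⟩ := (Set.Icc_infinite hab).exists_notMem_finset p.roots.toFinset
  refine intervalIntegral.integral_pos hab (p.continuous.mul p.continuous).continuousOn
    (fun t _ => mul_self_nonneg _) ⟨c, hc, mul_self_pos.2 fun h => hroot ?_⟩
  simpa [hp] using h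

noncomputable abbrev Polynomial.degreeLT.l2Core (n : ℕ) {a b : ℝ} (hab : a < b) :
    InnerProductSpace.Core ℝ (degreeLT ℝ n) where
  inner p q := ∫ t in a..b, (p : ℝ[X]).eval t * (q : ℝ[X]).eval t
  conj_inner_symm p q := by simp only [conj_trivial, mul_comm]
  re_inner_nonneg p :=
    intervalIntegral.integral_nonneg hab.le fun t _ => mul_self_nonneg _
  add_left p q r := by
    simp only [Submodule.coe_add, eval_add, add_mul]
    exact intervalIntegral.integral_add
      (((p : ℝ[X]).continuous.mul (r : ℝ[X]).continuous).intervalIntegrable _ _)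
      (((q : ℝ[X]).continuous.mul (r : ℝ[X]).continuous).intervalIntegrable _ _)
  smul_left p q c := by
    simp only [SetLike.val_smul, eval_smul, smul_eq_mul, mul_assoc, conj_trivial,
      intervalIntegral.integral_const_mul]
  definite p hp := by
    by_contra hne
    exact (integral_eval_mul_self_pos hab (p := p) (by simpa using hne)).ne' hp

theorem Polynomial.exists_integral_derivative_sq_le_on_degreeLT (n : ℕ) {a b : ℝ}
    (hab : a < b) :
    ∃ C : ℝ, 0 < C ∧ ∀ p ∈ degreeLT ℝ n,
      ∫ t in a..b, (p.derivative.eval t) ^ 2 ≤ C ^ 2 * ∫ t in a..b, (p.eval t) ^ 2 := by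
  let _ := (degreeLT.l2Core n hab).toNormedAddCommGroup
  let _ := InnerProductSpace.ofCore (degreeLT.l2Core n hab).toCore
  have : FiniteDimensional ℝ (degreeLT ℝ n) := (degreeLTEquiv ℝ n).symm.finiteDimensional
  let D : degreeLT ℝ n →ₗ[ℝ] degreeLT ℝ n := derivative.restrict fun p hp =>
    mem_degreeLT.2 (degree_derivative_le.trans_lt (mem_degreeLT.1 hp))
  have norm_sq (q : degreeLT ℝ n) : ‖q‖ ^ 2 = ∫ t in a..b, ((q : ℝ[X]).eval t) ^ 2 := by
    rw [← real_inner_self_eq_norm_sq]; simp only [sq]; rfl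
  obtain ⟨C, hC, hD⟩ := (LinearMap.toContinuousLinearMap D).bound
  refine ⟨C, hC, fun p hp => ?_⟩
  have := pow_le_pow_left₀ (norm_nonneg _) (hD ⟨p, hp⟩) 2
  rwa [mul_pow, norm_sq, norm_sq] at this

theorem intervalIntegral.integral_unitInterval_comp_affine (f : ℝ → ℝ) {a b : ℝ}
    (hab : a ≠ b) :
    ∫ t in (0 : ℝ)..1, f ((b - a) * t + a) = (b - a)⁻¹ * ∫ t in a..b, f t := by
  simp [intervalIntegral.integral_comp_mul_add f (sub_ne_zero.2 hab.symm)]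

/-- One-dimensional inverse estimate for polynomials of degree at most `r`:
the `L²(a,b)` norm of the derivative is bounded by `C (b-a)⁻¹` times the
`L²(a,b)` norm of the polynomial, with `C` depending only on `r`. -/
theorem polynomial_inverse_estimate (r : ℕ) :
    ∃ C : ℝ, 0 < C ∧ ∀ a b : ℝ, a < b → ∀ p : Polynomial ℝ, p.natDegree ≤ r →
      (∫ t in a..b, (p.derivative.eval t) ^ 2) ≤
        C ^ 2 * ((b - a)⁻¹) ^ 2 * ∫ t in a..b, (p.eval t) ^ 2 := by
  obtain ⟨C, hC, hunit⟩ :=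
    exists_integral_derivative_sq_le_on_degreeLT (r + 1) zero_lt_one
  refine ⟨C, hC, fun a b hab p hp => ?_⟩
  have hba : 0 < b - a := sub_pos.2 hab
  let q := p.comp (Polynomial.C (b - a) * X + Polynomial.C a)
  have hq : q ∈ degreeLT ℝ (r + 1) := by
    rw [degreeLT_succ_eq_degreeLE, mem_degreeLE, ← natDegree_le_iff_degree_le]
    exact natDegree_comp_le.trans ((Nat.mul_le_mul hp natDegree_linear_le).trans_eq (mul_one r))
  have hq_sq : ∫ t in (0 : ℝ)..1, (q.eval t) ^ 2 = (b - a)⁻¹ * ∫ t in a..b, (p.eval t) ^ 2 := by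
    simpa [q] using
      intervalIntegral.integral_unitInterval_comp_affine (fun t => (p.eval t) ^ 2) hab.ne
  have hq'_sq : ∫ t in (0 : ℝ)..1, (q.derivative.eval t) ^ 2 =
      (b - a) * ∫ t in a..b, (p.derivative.eval t) ^ 2 := by
    simp [q, derivative_comp, mul_pow, intervalIntegral.integral_const_mul,
      intervalIntegral.integral_unitInterval_comp_affine (fun t => (p.derivative.eval t) ^ 2)
        hab.ne]
    field_simp
  have hbound := hunit q hq
  rw [hq_sq, hq'_sq] at hbound
  calc ∫ t in a..b, (p.derivative.eval t) ^ 2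
      = (b - a)⁻¹ * ((b - a) * ∫ t in a..b, (p.derivative.eval t) ^ 2) := by field_simp
    _ ≤ (b - a)⁻¹ * (C ^ 2 * ((b - a)⁻¹ * ∫ t in a..b, (p.eval t) ^ 2)) := by gcongr
    _ = C ^ 2 * ((b - a)⁻¹) ^ 2 * ∫ t in a..b, (p.eval t) ^ 2 := by ring
end

section
/- For every integer r ≥ 0 there exists a constant C > 0, depending only on r, with the following property: for every T > 0, all real numbers a, b with 0 ≤ a < b ≤ T, every real polynomial w of degree at most r, and every real polynomial q of degree at most r satisfying ∫_a^b (φ_T(t)·w(t) − q(t))·p(t) dt = 0 for every real polynomial p of degree at most r, one has ‖φ_T·w − q‖_{L²(a,b)} ≤ C (b−a) ‖w‖_{L²(a,b)}. -/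
/-!
Write `f = φ_T w - q`. Orthogonality of `f` to the polynomials of degree `≤ r` makes `q` the
best `L²(a,b)`-approximation of `φ_T w` among them, so `‖f‖ ≤ ‖φ_T w - φ_T(a) w‖`. On `[0, ∞)`
the weight `φ_T` is `e`-Lipschitz (its derivative is `-exp((T-t)/T)`), hence
`|φ_T(t) - φ_T(a)| ≤ e (b - a)` on `[a, b]`, which gives the estimate with `C = e`.
-/

open Real Set intervalIntegral Polynomial
open MeasureTheory (volume)

noncomputable def expWeight (T t : ℝ) : ℝ := T * exp ((T - t) / T)

theorem hasDerivAt_expWeight {T : ℝ} (hT : T ≠ 0) (t : ℝ) :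
    HasDerivAt (expWeight T) (-exp ((T - t) / T)) t :=
  ((((hasDerivAt_id t).const_sub T).div_const T).exp.const_mul T).congr_deriv
    (by simp only [id]; field_simp)

theorem abs_expWeight_sub_le {T s t : ℝ} (hT : 0 < T) (hs : 0 ≤ s) (ht : 0 ≤ t) :
    |expWeight T t - expWeight T s| ≤ exp 1 * |t - s| := by
  refine (convex_Ici 0).norm_image_sub_le_of_norm_hasDerivWithin_le
    (fun x _ => (hasDerivAt_expWeight hT.ne' x).hasDerivWithinAt) (fun x hx => ?_) hs ht
  rw [norm_neg, norm_of_nonneg (exp_pos _).le, exp_le_exp, div_le_one hT]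
  linarith [mem_Ici.mp hx]

theorem integral_sq_le_integral_add_sq {f h : ℝ → ℝ} {a b : ℝ} (hab : a ≤ b)
    (hf : IntervalIntegrable (fun t => f t ^ 2) volume a b)
    (hfh : IntervalIntegrable (fun t => f t * h t) volume a b)
    (hh : IntervalIntegrable (fun t => h t ^ 2) volume a b)
    (horth : ∫ t in a..b, f t * h t = 0) :
    ∫ t in a..b, f t ^ 2 ≤ ∫ t in a..b, (f t + h t) ^ 2 := by
  have hexpand : ∫ t in a..b, (f t + h t) ^ 2
      = (∫ t in a..b, f t ^ 2) + 2 * (∫ t in a..b, f t * h t) + ∫ t in a..b, h t ^ 2 := by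
    rw [← integral_const_mul, ← integral_add hf (hfh.const_mul 2),
      ← integral_add (hf.add (hfh.const_mul 2)) hh]
    congr 1 with t
    ring
  have hh_nonneg : 0 ≤ ∫ t in a..b, h t ^ 2 := integral_nonneg hab fun t _ => sq_nonneg _
  rw [hexpand, horth]
  linarith

theorem integral_sq_sub_le_of_orthogonal {g : ℝ → ℝ} (hg : Continuous g) {a b : ℝ} (hab : a ≤ b)
    {r : ℕ} {q p : ℝ[X]} (hq : q.natDegree ≤ r) (hp : p.natDegree ≤ r)
    (horth : ∀ p' : ℝ[X], p'.natDegree ≤ r → ∫ t in a..b, (g t - q.eval t) * p'.eval t = 0) :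
    ∫ t in a..b, (g t - q.eval t) ^ 2 ≤ ∫ t in a..b, (g t - p.eval t) ^ 2 := by
  have hqp : (q - p).natDegree ≤ r := (natDegree_sub_le _ _).trans (max_le hq hp)
  have hf : Continuous fun t => g t - q.eval t := hg.sub q.continuous
  have h := integral_sq_le_integral_add_sq hab ((hf.pow 2).intervalIntegrable a b)
    ((hf.mul (q - p).continuous).intervalIntegrable a b)
    (((q - p).continuous.pow 2).intervalIntegrable a b) (horth _ hqp)
  simpa only [eval_sub, sub_add_sub_cancel] using h

theorem integral_sq_mul_le {g w : ℝ → ℝ} {a b M : ℝ} (hab : a ≤ b)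
    (hgw : IntervalIntegrable (fun t => (g t * w t) ^ 2) volume a b)
    (hw : IntervalIntegrable (fun t => w t ^ 2) volume a b)
    (hg : ∀ t ∈ Icc a b, |g t| ≤ M) :
    ∫ t in a..b, (g t * w t) ^ 2 ≤ M ^ 2 * ∫ t in a..b, w t ^ 2 := by
  rw [← integral_const_mul]
  refine integral_mono_on hab hgw (hw.const_mul _) fun t ht => ?_
  obtain ⟨hlo, hhi⟩ := abs_le.mp (hg t ht)
  rw [mul_pow]
  exact mul_le_mul_of_nonneg_right (sq_le_sq' hlo hhi) (sq_nonneg _)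

/-- Approximation property of the `L²(a,b)`-orthogonal projection onto polynomials of
degree at most `r`, applied to `φ_T · w` with `φ_T(t) = T exp((T-t)/T)` and `w` a
polynomial of degree at most `r`. -/
theorem proj_exp_weight_L2_estimate (r : ℕ) :
    ∃ C : ℝ, 0 < C ∧ ∀ T a b : ℝ, 0 < T → 0 ≤ a → a < b → b ≤ T →
      ∀ w q : Polynomial ℝ, w.natDegree ≤ r → q.natDegree ≤ r →
        (∀ p : Polynomial ℝ, p.natDegree ≤ r →
          (∫ t in a..b,
            (T * Real.exp ((T - t) / T) * w.eval t - q.eval t) * p.eval t) = 0) →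
        Real.sqrt (∫ t in a..b,
            (T * Real.exp ((T - t) / T) * w.eval t - q.eval t) ^ 2) ≤
          C * (b - a) * Real.sqrt (∫ t in a..b, (w.eval t) ^ 2) := by
  refine ⟨exp 1, exp_pos 1, fun T a b hT ha hab _ w q hw hq horth => ?_⟩
  have hcont : Continuous (expWeight T) :=
    continuous_iff_continuousAt.mpr fun t => (hasDerivAt_expWeight hT.ne' t).continuousAt
  have hweight : ∀ t ∈ Icc a b, |expWeight T t - expWeight T a| ≤ exp 1 * (b - a) := fun t ht =>
    (abs_expWeight_sub_le hT ha (ha.trans ht.1)).trans <| by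
      rw [abs_of_nonneg (sub_nonneg.mpr ht.1)]
      gcongr
      exact ht.2
  have hp : (C (expWeight T a) * w).natDegree ≤ r := (natDegree_C_mul_le _ _).trans hw
  have hbest := integral_sq_sub_le_of_orthogonal (g := fun t => expWeight T t * w.eval t)
    (hcont.mul w.continuous) hab.le hq hp horth
  have hbound := integral_sq_mul_le (g := fun t => expWeight T t - expWeight T a) hab.le
    (((hcont.sub continuous_const).mul w.continuous |>.pow 2).intervalIntegrable a b)
    ((w.continuous.pow 2).intervalIntegrable a b) hweight
  simp only [eval_mul, eval_C, ← sub_mul] at hbest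
  calc √(∫ t in a..b, (expWeight T t * w.eval t - q.eval t) ^ 2)
      ≤ √((exp 1 * (b - a)) ^ 2 * ∫ t in a..b, w.eval t ^ 2) :=
        sqrt_le_sqrt (hbest.trans hbound)
    _ = exp 1 * (b - a) * √(∫ t in a..b, w.eval t ^ 2) := by
        rw [sqrt_mul (sq_nonneg _), sqrt_sq (mul_nonneg (exp_pos 1).le (sub_nonneg.mpr hab.le))]
end

section
/- For every integer r ≥ 0 there exists a constant C > 0, depending only on r, with the following property: for all real numbers a < b, every continuously differentiable function ψ : [a,b] → ℝ, and every real polynomial q of degree at most r satisfying ∫_a^b (ψ(t) − q(t))·p(t) dt = 0 for every real polynomial p of degree at most r, one has ∫_a^b q′(t)² dt ≤ C² ∫_a^b ψ′(t)² dt. -/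
/-!
Subtracting the constant `ψ a`, the best-approximation property of the projection gives
`‖q - ψ a‖ ≤ ‖ψ - ψ a‖` in `L²(a,b)`, and the Poincaré inequality
`‖ψ - ψ a‖ ≤ (b - a) ‖ψ'‖` follows from the fundamental theorem of calculus and Cauchy–Schwarz.
On the other hand, differentiation is a linear map on the finite-dimensional space of polynomials of
degree `≤ r`, hence bounded for the `L²(0,1)` norm by some `C`; the affine change of variables
`[0,1] → [a,b]` turns this into `(b - a) ‖q'‖ ≤ C ‖q - ψ a‖`, and the factors `b - a` cancel.
-/

open Polynomial intervalIntegral MeasureTheory Set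

lemma sq_intervalIntegral_le {f : ℝ → ℝ} {a b : ℝ} (hab : a ≤ b)
    (hf : IntervalIntegrable f volume a b)
    (hf2 : IntervalIntegrable (fun t => f t ^ 2) volume a b) :
    (∫ t in a..b, f t) ^ 2 ≤ (b - a) * ∫ t in a..b, f t ^ 2 := by
  set I := ∫ t in a..b, f t
  have hexpand : ∫ t in a..b, ((b - a) * f t - I) ^ 2
      = (b - a) * ((b - a) * (∫ t in a..b, f t ^ 2) - I ^ 2) := by
    have hpt : ∀ t,
        ((b - a) * f t - I) ^ 2 = (b - a) ^ 2 * f t ^ 2 - 2 * (b - a) * I * f t + I ^ 2 :=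
      fun t => by ring
    simp only [hpt]
    rw [integral_add ((hf2.const_mul _).sub (hf.const_mul _)) intervalIntegrable_const,
      integral_sub (hf2.const_mul _) (hf.const_mul _), intervalIntegral.integral_const_mul,
      intervalIntegral.integral_const_mul, intervalIntegral.integral_const, smul_eq_mul]
    ring
  have hnonneg : 0 ≤ (b - a) * ((b - a) * (∫ t in a..b, f t ^ 2) - I ^ 2) :=
    hexpand ▸ integral_nonneg hab fun t _ => sq_nonneg _
  rcases hab.eq_or_lt with rfl | hlt
  · simp [I]
  · linarith [(mul_nonneg_iff_of_pos_left (sub_pos.mpr hlt)).mp hnonneg]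

lemma integral_sub_sq_le_of_hasDerivWithinAt {ψ ψ' : ℝ → ℝ} {a b : ℝ} (hab : a ≤ b)
    (hψ : ∀ t ∈ Icc a b, HasDerivWithinAt ψ (ψ' t) (Icc a b) t)
    (hψ' : ContinuousOn ψ' (Icc a b)) :
    ∫ t in a..b, (ψ t - ψ a) ^ 2 ≤ (b - a) ^ 2 * ∫ t in a..b, ψ' t ^ 2 := by
  have hψc : ContinuousOn ψ (Icc a b) := fun t ht => (hψ t ht).continuousWithinAt
  have hpt : ∀ t ∈ Icc a b, (ψ t - ψ a) ^ 2 ≤ (b - a) * ∫ s in a..b, ψ' s ^ 2 := by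
    rintro t ⟨hat, htb⟩
    have hsub : Icc a t ⊆ Icc a b := Icc_subset_Icc_right htb
    have hftc : ∫ s in a..t, ψ' s = ψ t - ψ a :=
      integral_eq_sub_of_hasDerivAt_of_le hat (hψc.mono hsub)
        (fun s hs => (hψ s (hsub (Ioo_subset_Icc_self hs))).hasDerivAt
          (Icc_mem_nhds hs.1 (hs.2.trans_le htb)))
        ((hψ'.mono hsub).intervalIntegrable_of_Icc hat)
    calc (ψ t - ψ a) ^ 2 = (∫ s in a..t, ψ' s) ^ 2 := by rw [hftc]
      _ ≤ (t - a) * ∫ s in a..t, ψ' s ^ 2 :=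
        sq_intervalIntegral_le hat ((hψ'.mono hsub).intervalIntegrable_of_Icc hat)
          (((hψ'.pow 2).mono hsub).intervalIntegrable_of_Icc hat)
      _ ≤ (b - a) * ∫ s in a..b, ψ' s ^ 2 := by
        gcongr
        · exact integral_nonneg hat fun s _ => sq_nonneg _
        · exact integral_mono_interval le_rfl hat htb (ae_of_all _ fun s => sq_nonneg _)
            ((hψ'.pow 2).intervalIntegrable_of_Icc hab)
  calc ∫ t in a..b, (ψ t - ψ a) ^ 2
      ≤ ∫ _ in a..b, (b - a) * ∫ s in a..b, ψ' s ^ 2 :=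
        integral_mono_on hab (((hψc.sub continuousOn_const).pow 2).intervalIntegrable_of_Icc hab)
          intervalIntegrable_const hpt
    _ = (b - a) ^ 2 * ∫ t in a..b, ψ' t ^ 2 := by
        rw [intervalIntegral.integral_const, smul_eq_mul]; ring

lemma integral_sq_le_integral_add_sq_of_integral_mul_eq_zero {u v : ℝ → ℝ} {a b : ℝ}
    (hab : a ≤ b) (hu : ContinuousOn u (Icc a b)) (hv : ContinuousOn v (Icc a b))
    (huv : ∫ t in a..b, u t * v t = 0) :
    ∫ t in a..b, v t ^ 2 ≤ ∫ t in a..b, (u t + v t) ^ 2 := by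
  have hu2 : IntervalIntegrable (fun t => u t ^ 2) volume a b :=
    (hu.pow 2).intervalIntegrable_of_Icc hab
  have huv' : IntervalIntegrable (fun t => 2 * (u t * v t)) volume a b :=
    ((hu.mul hv).intervalIntegrable_of_Icc hab).const_mul 2
  have hv2 : IntervalIntegrable (fun t => v t ^ 2) volume a b :=
    (hv.pow 2).intervalIntegrable_of_Icc hab
  have hexpand : ∫ t in a..b, (u t + v t) ^ 2
      = (∫ t in a..b, u t ^ 2) + 2 * (∫ t in a..b, u t * v t) + ∫ t in a..b, v t ^ 2 := by
    simp only [add_sq, mul_assoc]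
    rw [integral_add (hu2.add huv') hv2, integral_add hu2 huv', intervalIntegral.integral_const_mul]
  rw [hexpand, huv]
  linarith [integral_nonneg (μ := volume) hab fun t _ => sq_nonneg (u t)]

namespace Polynomial

lemma integral_eval_mul_self_pos_s9 {p : ℝ[X]} (hp : p ≠ 0) {a b : ℝ} (hab : a < b) :
    0 < ∫ t in a..b, p.eval t * p.eval t := by
  obtain ⟨c, hc, hcroot⟩ := (Icc_infinite hab).exists_notMem_finset p.roots.toFinset
  refine integral_pos hab (p.continuous.mul p.continuous).continuousOn
    (fun t _ => mul_self_nonneg _) ⟨c, hc, mul_self_pos.mpr ?_⟩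
  simpa [hp] using hcroot

@[reducible] noncomputable def degreeLTL2Core (n : ℕ) : InnerProductSpace.Core ℝ ℝ[X]_n where
  inner p q := ∫ t in (0 : ℝ)..1, (p : ℝ[X]).eval t * (q : ℝ[X]).eval t
  conj_inner_symm p q := by simp [mul_comm]
  re_inner_nonneg p := integral_nonneg zero_le_one fun t _ => mul_self_nonneg _
  add_left p q s := by
    simp only [Submodule.coe_add, eval_add, add_mul]
    exact integral_add ((p : ℝ[X]).continuous.mul (s : ℝ[X]).continuous |>.intervalIntegrable _ _)
      ((q : ℝ[X]).continuous.mul (s : ℝ[X]).continuous |>.intervalIntegrable _ _)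
  smul_left p q c := by
    simp only [SetLike.val_smul, eval_smul, smul_eq_mul, mul_assoc, RCLike.conj_to_real]
    exact intervalIntegral.integral_const_mul _ _
  definite p hp := by
    by_contra hne
    exact (integral_eval_mul_self_pos_s9 (by simpa using hne) zero_lt_one).ne' hp

lemma exists_integral_derivative_sq_le_unitInterval (r : ℕ) :
    ∃ C : ℝ, 0 < C ∧ ∀ q : ℝ[X], q.natDegree ≤ r →
      ∫ t in (0 : ℝ)..1, q.derivative.eval t ^ 2 ≤ C ^ 2 * ∫ t in (0 : ℝ)..1, q.eval t ^ 2 := by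
  let _ := (degreeLTL2Core (r + 1)).toNormedAddCommGroup
  let _ := InnerProductSpace.ofCore (degreeLTL2Core (r + 1)).toCore
  have norm_sq (v : ℝ[X]_(r + 1)) : ‖v‖ ^ 2 = ∫ t in (0 : ℝ)..1, (v : ℝ[X]).eval t ^ 2 := by
    rw [← real_inner_self_eq_norm_sq]
    simp only [sq]
    rfl
  let D : ℝ[X]_(r + 1) →ₗ[ℝ] ℝ[X]_(r + 1) := derivative.restrict fun q hq =>
    mem_degreeLT.mpr (degree_derivative_le.trans_lt (mem_degreeLT.mp hq))
  obtain ⟨C, hC, hD⟩ := SemilinearMapClass.bound_of_continuous D D.continuous_of_finiteDimensional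
  refine ⟨C, hC, fun q hq => ?_⟩
  let v : ℝ[X]_(r + 1) := ⟨q, mem_degreeLT.mpr ((degree_le_natDegree).trans_lt
    (by exact_mod_cast Nat.lt_succ_of_le hq))⟩
  calc ∫ t in (0 : ℝ)..1, q.derivative.eval t ^ 2 = ‖D v‖ ^ 2 := (norm_sq (D v)).symm
    _ ≤ (C * ‖v‖) ^ 2 := pow_le_pow_left₀ (norm_nonneg _) (hD v) 2
    _ = C ^ 2 * ∫ t in (0 : ℝ)..1, q.eval t ^ 2 := by rw [mul_pow, norm_sq]

lemma exists_sq_mul_integral_derivative_sq_le (r : ℕ) :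
    ∃ C : ℝ, 0 < C ∧ ∀ a b : ℝ, a ≤ b → ∀ q : ℝ[X], q.natDegree ≤ r →
      (b - a) ^ 2 * ∫ t in a..b, q.derivative.eval t ^ 2 ≤ C ^ 2 * ∫ t in a..b, q.eval t ^ 2 := by
  obtain ⟨C, hC, hCq⟩ := exists_integral_derivative_sq_le_unitInterval r
  refine ⟨C, hC, fun a b hab q hq => ?_⟩
  have hscale (f : ℝ → ℝ) :
      (b - a) * ∫ t in (0 : ℝ)..1, f (a + (b - a) * t) = ∫ x in a..b, f x := by
    simp
  let p := q.comp (Polynomial.C (b - a) * X + Polynomial.C a)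
  have hp : p.natDegree ≤ r := natDegree_comp_le.trans <| by
    simpa using Nat.mul_le_mul hq (natDegree_linear_le (a := b - a) (b := a))
  have hp_eval (t : ℝ) : p.eval t = q.eval (a + (b - a) * t) := by simp [p, add_comm]
  have hp_deriv (t : ℝ) :
      p.derivative.eval t = (b - a) * q.derivative.eval (a + (b - a) * t) := by
    simp [p, derivative_comp, add_comm]
  have hp_deriv_sq : ∫ t in (0 : ℝ)..1, p.derivative.eval t ^ 2
      = (b - a) ^ 2 * ∫ t in (0 : ℝ)..1, q.derivative.eval (a + (b - a) * t) ^ 2 := by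
    simp only [hp_deriv, mul_pow]
    exact intervalIntegral.integral_const_mul _ _
  calc (b - a) ^ 2 * ∫ t in a..b, q.derivative.eval t ^ 2
      = (b - a) * ∫ t in (0 : ℝ)..1, p.derivative.eval t ^ 2 := by
        rw [hp_deriv_sq, ← hscale fun x => q.derivative.eval x ^ 2]; ring
    _ ≤ (b - a) * (C ^ 2 * ∫ t in (0 : ℝ)..1, p.eval t ^ 2) :=
        mul_le_mul_of_nonneg_left (hCq p hp) (sub_nonneg.mpr hab)
    _ = C ^ 2 * ∫ t in a..b, q.eval t ^ 2 := by
        simp only [hp_eval]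
        rw [← hscale fun x => q.eval x ^ 2]; ring

lemma integral_eval_sub_sq_le_of_orthogonal {ψ : ℝ → ℝ} {a b : ℝ} (hab : a ≤ b)
    (hψ : ContinuousOn ψ (Icc a b)) {r : ℕ} {q p : ℝ[X]} (hq : q.natDegree ≤ r)
    (hp : p.natDegree ≤ r)
    (horth : ∀ s : ℝ[X], s.natDegree ≤ r → ∫ t in a..b, (ψ t - q.eval t) * s.eval t = 0) :
    ∫ t in a..b, (q.eval t - p.eval t) ^ 2 ≤ ∫ t in a..b, (ψ t - p.eval t) ^ 2 := by
  have hqp : (q - p).natDegree ≤ r := (natDegree_sub_le _ _).trans (max_le hq hp)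
  simpa using integral_sq_le_integral_add_sq_of_integral_mul_eq_zero hab
    (hψ.sub q.continuous.continuousOn) (q - p).continuous.continuousOn (horth _ hqp)

end Polynomial

/-- `H¹(a,b)`-stability of the `L²(a,b)`-orthogonal projection onto polynomials of
degree at most `r`, with constant independent of the interval. -/
theorem proj_H1_stability (r : ℕ) :
    ∃ C : ℝ, 0 < C ∧ ∀ a b : ℝ, a < b → ∀ ψ ψ' : ℝ → ℝ,
      (∀ t ∈ Set.Icc a b, HasDerivWithinAt ψ (ψ' t) (Set.Icc a b) t) →
      ContinuousOn ψ' (Set.Icc a b) →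
      ∀ q : Polynomial ℝ, q.natDegree ≤ r →
        (∀ p : Polynomial ℝ, p.natDegree ≤ r →
          (∫ t in a..b, (ψ t - q.eval t) * p.eval t) = 0) →
        (∫ t in a..b, (q.derivative.eval t) ^ 2) ≤ C ^ 2 * ∫ t in a..b, (ψ' t) ^ 2 := by
  obtain ⟨C, hC, hinverse⟩ := exists_sq_mul_integral_derivative_sq_le r
  refine ⟨C, hC, fun a b hab ψ ψ' hψ hψ' q hq horth => ?_⟩
  let g := q - Polynomial.C (ψ a)
  have hg : g.natDegree ≤ r := (natDegree_sub_le _ _).trans (by simpa using hq)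
  have hbest : ∫ t in a..b, g.eval t ^ 2 ≤ ∫ t in a..b, (ψ t - ψ a) ^ 2 := by
    simpa [g] using integral_eval_sub_sq_le_of_orthogonal hab.le
      (fun t ht => (hψ t ht).continuousWithinAt) hq ((natDegree_C _).trans_le r.zero_le) horth
  refine le_of_mul_le_mul_left ?_ (pow_pos (sub_pos.mpr hab) 2)
  calc (b - a) ^ 2 * ∫ t in a..b, q.derivative.eval t ^ 2
      = (b - a) ^ 2 * ∫ t in a..b, g.derivative.eval t ^ 2 := by simp [g]
    _ ≤ C ^ 2 * ∫ t in a..b, g.eval t ^ 2 := hinverse a b hab.le g hg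
    _ ≤ C ^ 2 * ∫ t in a..b, (ψ t - ψ a) ^ 2 := by gcongr
    _ ≤ C ^ 2 * ((b - a) ^ 2 * ∫ t in a..b, ψ' t ^ 2) := by
        gcongr
        exact integral_sub_sq_le_of_hasDerivWithinAt hab.le hψ hψ'
    _ = (b - a) ^ 2 * (C ^ 2 * ∫ t in a..b, ψ' t ^ 2) := by ring
end

section
/- Let H be a real inner product space, let U ⊆ V ⊆ H be linear subspaces with U complete (for instance finite-dimensional), and let P : H → H denote the orthogonal projection onto U. Let s : H × H → ℝ be a bilinear form and let 0 < μ̌ and μ̂ > 0 be such that μ̌‖w‖² ≤ s(w, w) ≤ μ̂‖w‖² for every w ∈ V with P w = 0. Define m(x, y) := ⟨P x, P y⟩ + s(x − P x, y − P y). Then for every v ∈ V, min{1, μ̌}·‖v‖² ≤ m(v, v) ≤ max{1, μ̂}·‖v‖². -/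
open RealInnerProductSpace

/-! The orthogonal splitting `v = P v + (v - P v)` gives `‖v‖² = ‖P v‖² + ‖v - P v‖²`, and
`m(v, v) = ‖P v‖² + s(v - P v, v - P v)`, where `v - P v` lies in `V` and in the kernel of `P`.
So `m(v, v)` weighs the two Pythagorean summands by `1` and by a factor in `[μ̌, μ̂]`. -/

theorem min_one_mul_add_le_add {a b c μ : ℝ} (ha : 0 ≤ a) (hb : 0 ≤ b) (hc : μ * b ≤ c) :
    min 1 μ * (a + b) ≤ a + c := by
  nlinarith [min_le_left 1 μ, min_le_right 1 μ]

theorem add_le_max_one_mul_add {a b c μ : ℝ} (ha : 0 ≤ a) (hb : 0 ≤ b) (hc : c ≤ μ * b) :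
    a + c ≤ max 1 μ * (a + b) := by
  nlinarith [le_max_left 1 μ, le_max_right 1 μ]

namespace Submodule

variable {H : Type*} [NormedAddCommGroup H] [InnerProductSpace ℝ H]
  (U : Submodule ℝ H) [U.HasOrthogonalProjection]

theorem starProjection_sub_starProjection_self (v : H) :
    U.starProjection (v - U.starProjection v) = 0 :=
  (starProjection_apply_eq_zero_iff U).mpr (sub_starProjection_mem_orthogonal v)

theorem norm_sq_eq_norm_sq_starProjection_add_norm_sq_sub (v : H) :
    ‖v‖ ^ 2 = ‖U.starProjection v‖ ^ 2 + ‖v - U.starProjection v‖ ^ 2 := by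
  have horth : ⟪U.starProjection v, v - U.starProjection v⟫ = 0 :=
    (sub_starProjection_mem_orthogonal v) _ (starProjection_apply_mem U v)
  simpa only [sq, add_sub_cancel] using
    norm_add_sq_eq_norm_sq_add_norm_sq_real horth

end Submodule

theorem discrete_form_stability_general
    {H : Type*} [NormedAddCommGroup H] [InnerProductSpace ℝ H]
    (U V : Submodule ℝ H) [CompleteSpace U] (hUV : U ≤ V)
    (s : H →ₗ[ℝ] H →ₗ[ℝ] ℝ) (μc μh : ℝ)
    (hs : ∀ w ∈ V, (Submodule.orthogonalProjectionOnto U w : H) = 0 →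
      μc * ‖w‖ ^ 2 ≤ s w w ∧ s w w ≤ μh * ‖w‖ ^ 2) :
    ∀ v ∈ V,
      min 1 μc * ‖v‖ ^ 2 ≤
          ⟪(Submodule.orthogonalProjectionOnto U v : H), (Submodule.orthogonalProjectionOnto U v : H)⟫ +
            s (v - (Submodule.orthogonalProjectionOnto U v : H)) (v - (Submodule.orthogonalProjectionOnto U v : H)) ∧
        ⟪(Submodule.orthogonalProjectionOnto U v : H), (Submodule.orthogonalProjectionOnto U v : H)⟫ +
            s (v - (Submodule.orthogonalProjectionOnto U v : H)) (v - (Submodule.orthogonalProjectionOnto U v : H)) ≤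
          max 1 μh * ‖v‖ ^ 2 := by
  intro v hv
  simp only [Submodule.coe_orthogonalProjectionOnto_apply, real_inner_self_eq_norm_sq]
  have hwV : v - U.starProjection v ∈ V :=
    V.sub_mem hv (hUV (U.starProjection_apply_mem v))
  obtain ⟨hlower, hupper⟩ := hs _ hwV (U.starProjection_sub_starProjection_self v)
  rw [U.norm_sq_eq_norm_sq_starProjection_add_norm_sq_sub v]
  exact ⟨min_one_mul_add_le_add (sq_nonneg _) (sq_nonneg _) hlower,
    add_le_max_one_mul_add (sq_nonneg _) (sq_nonneg _) hupper⟩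

/-- Stability transfer for virtual-element-type discrete bilinear forms: a two-sided
bound for the stabilizing form `s` on the kernel of the orthogonal projection `P`
onto `U` implies a two-sided bound for `m(x,y) = ⟪P x, P y⟫ + s(x - P x, y - P y)`
on `V`. -/
theorem discrete_form_stability
    {H : Type*} [NormedAddCommGroup H] [InnerProductSpace ℝ H]
    (U V : Submodule ℝ H) [CompleteSpace U] (hUV : U ≤ V)
    (s : H →ₗ[ℝ] H →ₗ[ℝ] ℝ) (μc μh : ℝ) (hμc : 0 < μc) (hμh : 0 < μh)
    (hs : ∀ w ∈ V, (Submodule.orthogonalProjectionOnto U w : H) = 0 →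
      μc * ‖w‖ ^ 2 ≤ s w w ∧ s w w ≤ μh * ‖w‖ ^ 2) :
    ∀ v ∈ V,
      min 1 μc * ‖v‖ ^ 2 ≤
          ⟪(Submodule.orthogonalProjectionOnto U v : H), (Submodule.orthogonalProjectionOnto U v : H)⟫ +
            s (v - (Submodule.orthogonalProjectionOnto U v : H)) (v - (Submodule.orthogonalProjectionOnto U v : H)) ∧
        ⟪(Submodule.orthogonalProjectionOnto U v : H), (Submodule.orthogonalProjectionOnto U v : H)⟫ +
            s (v - (Submodule.orthogonalProjectionOnto U v : H)) (v - (Submodule.orthogonalProjectionOnto U v : H)) ≤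
          max 1 μh * ‖v‖ ^ 2 :=
  discrete_form_stability_general U V hUV s μc μh hs
end

section
/- Let H be a real inner product space, let N ≥ 1 be an integer, and let 0 = t_0 < t_1 < ⋯ < t_N = T be a partition of [0, T]. For n = 1, …, N let w_n : [t_{n−1}, t_n] → H be continuously differentiable, and for 1 ≤ n ≤ N−1 set ⟦w⟧_n := w_n(t_n) − w_{n+1}(t_n). Then Σ_{n=1}^N ∫_{t_{n−1}}^{t_n} ⟨w_n′(t), w_n(t)⟩ dt − Σ_{n=1}^{N−1} ⟨⟦w⟧_n, w_{n+1}(t_n)⟩ + ‖w_1(0)‖² = ½ ( ‖w_N(T)‖² + Σ_{n=1}^{N−1} ‖⟦w⟧_n‖² + ‖w_1(0)‖² ). -/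
/-
The integrand `⟪w'ₙ, wₙ⟫` is half the derivative of `‖wₙ‖²`, so each integral equals
`(‖wₙ(tₙ)‖² - ‖wₙ(tₙ₋₁)‖²) / 2`, while each jump term satisfies
`2⟪a - b, b⟫ = ‖a‖² - ‖b‖² - ‖a - b‖²`. Subtracting, the values `‖wₙ(tₙ)‖²` and
`‖wₙ₊₁(tₙ)‖²` at the interior nodes cancel in pairs, leaving the final value, the initial
value and the squared jumps.
-/

open RealInnerProductSpace Finset

theorem integral_inner_deriv_self_eq {H : Type*} [NormedAddCommGroup H] [InnerProductSpace ℝ H]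
    {a b : ℝ} (hab : a ≤ b) {f f' : ℝ → H}
    (hf : ∀ s ∈ Set.Icc a b, HasDerivWithinAt f (f' s) (Set.Icc a b) s)
    (hf' : ContinuousOn f' (Set.Icc a b)) :
    ∫ s in a..b, ⟪f' s, f s⟫ = (‖f b‖ ^ 2 - ‖f a‖ ^ 2) / 2 := by
  have hcont : ContinuousOn f (Set.Icc a b) := fun s hs => (hf s hs).continuousWithinAt
  have hFTC : ∫ s in a..b, 2 * ⟪f s, f' s⟫ = ‖f b‖ ^ 2 - ‖f a‖ ^ 2 :=
    intervalIntegral.integral_eq_sub_of_hasDerivAt_of_le hab (hcont.norm.pow 2)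
      (fun s hs => ((hf s (Set.Ioo_subset_Icc_self hs)).hasDerivAt (Icc_mem_nhds hs.1 hs.2)).norm_sq)
      ((continuousOn_const.mul (hcont.inner hf')).intervalIntegrable_of_Icc hab)
  simp only [intervalIntegral.integral_const_mul, real_inner_comm (f' _)] at hFTC ⊢
  linarith

theorem real_inner_sub_self_eq {H : Type*} [NormedAddCommGroup H] [InnerProductSpace ℝ H]
    (x y : H) : ⟪x - y, y⟫ = (‖x‖ ^ 2 - ‖y‖ ^ 2 - ‖x - y‖ ^ 2) / 2 := by
  rw [norm_sub_sq_real, inner_sub_left, real_inner_self_eq_norm_sq]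
  ring

theorem sum_Icc_sub_eq_sub_add_sum_Icc_sub_succ {G : Type*} [AddCommGroup G] (A B : ℕ → G)
    (M : ℕ) :
    ∑ n ∈ Icc 1 (M + 1), (A n - B n) = A (M + 1) - B 1 + ∑ n ∈ Icc 1 M, (A n - B (n + 1)) := by
  induction M with
  | zero => simp
  | succ M ih =>
    rw [sum_Icc_succ_top (by omega), ih, sum_Icc_succ_top (by omega)]
    abel

/-- Coercivity identity for the upwind discontinuous Galerkin time-derivative form:
for piecewise `C¹`, `H`-valued functions on a partition `0 = t₀ < ⋯ < t_N = T`,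
the upwind DG form of the time derivative tested with the function itself equals
half the sum of the squared final value, squared jumps, and squared initial value. -/
theorem upwind_dg_time_derivative_identity
    {H : Type*} [NormedAddCommGroup H] [InnerProductSpace ℝ H]
    (N : ℕ) (hN : 1 ≤ N) (T : ℝ) (t : ℕ → ℝ)
    (ht0 : t 0 = 0) (htN : t N = T) (htmono : ∀ n < N, t n < t (n + 1))
    (w w' : ℕ → ℝ → H)
    (hw : ∀ n ∈ Finset.Icc 1 N, ∀ s ∈ Set.Icc (t (n - 1)) (t n),
      HasDerivWithinAt (w n) (w' n s) (Set.Icc (t (n - 1)) (t n)) s)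
    (hw' : ∀ n ∈ Finset.Icc 1 N, ContinuousOn (w' n) (Set.Icc (t (n - 1)) (t n))) :
    (∑ n ∈ Finset.Icc 1 N, ∫ s in (t (n - 1))..(t n), ⟪w' n s, w n s⟫)
        - (∑ n ∈ Finset.Icc 1 (N - 1), ⟪w n (t n) - w (n + 1) (t n), w (n + 1) (t n)⟫)
        + ‖w 1 0‖ ^ 2 =
      (1 / 2) * (‖w N T‖ ^ 2 +
        (∑ n ∈ Finset.Icc 1 (N - 1), ‖w n (t n) - w (n + 1) (t n)‖ ^ 2) + ‖w 1 0‖ ^ 2) := by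
  obtain ⟨M, rfl⟩ : ∃ M, N = M + 1 := ⟨N - 1, by omega⟩
  have hint : ∀ n ∈ Icc 1 (M + 1), ∫ s in (t (n - 1))..(t n), ⟪w' n s, w n s⟫ =
      (‖w n (t n)‖ ^ 2 - ‖w n (t (n - 1))‖ ^ 2) / 2 := by
    intro n hn
    obtain ⟨hn1, hnM⟩ := mem_Icc.1 hn
    have hle : t (n - 1) ≤ t n := by
      simpa [Nat.sub_add_cancel hn1] using (htmono (n - 1) (by omega)).le
    exact integral_inner_deriv_self_eq hle (hw n hn) (hw' n hn)
  rw [sum_congr rfl hint, ← sum_div, sum_Icc_sub_eq_sub_add_sum_Icc_sub_succ,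
    sum_congr rfl fun n _ => real_inner_sub_self_eq (w n (t n)) (w (n + 1) (t n))]
  simp only [Nat.add_sub_cancel, htN, ht0, ← sum_div, sum_sub_distrib]
  ring
end

section
/- Let V be a finite-dimensional real vector space with basis (e_1, …, e_M), let K be a real inner product space, let G : V → K be linear, and let a : V × V → ℝ be a bilinear form such that a(v, v) ≥ α_*·‖G v‖² for all v ∈ V, where α_* > 0. Let T > 0, let 0 = t_0 < ⋯ < t_N = T be a partition, let r ≥ 0 be an integer, and let u be given on each subinterval (t_{n−1}, t_n) by u(t) = Σ_ℓ α_ℓ^{(n)}(t)·e_ℓ with each α_ℓ^{(n)} a real polynomial of degree at most r. On each subinterval define Π(φ_T u)(t) := Σ_ℓ q_ℓ^{(n)}(t)·e_ℓ, where q_ℓ^{(n)} is a polynomial of degree at most r satisfying ∫_{t_{n−1}}^{t_n} (φ_T(t)·α_ℓ^{(n)}(t) − q_ℓ^{(n)}(t))·p(t) dt = 0 for every polynomial p of degree at most r. For θ > 0 and ν ≥ 0 set v := Π(φ_T u) + θ·u on each subinterval. Then ν Σ_{n=1}^N ∫_{t_{n−1}}^{t_n} a(u(t), v(t)) dt ≥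 ν α_* (T + θ) Σ_{n=1}^N ∫_{t_{n−1}}^{t_n} ‖G u(t)‖² dt. -/
/-!
On each slab write `u = ∑ αₗ eₗ`. Testing the orthogonality of `φ_T αₗ - qₗ` against `αₖ` and
expanding `a` bilinearly in the basis gives `∫ a(u, Π(φ_T u)) = ∫ φ_T a(u, u)`; since `Π` fixes `u`,
the same computation with weight `φ_T + θ` gives `∫ a(u, v) = ∫ (φ_T + θ) a(u, u)`. On `[0, T]` the
weight is at least `T + θ`, and `a(u, u) ≥ α_* ‖G u‖² ≥ 0`, so summing over slabs gives the bound.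
-/

open intervalIntegral

theorem LinearMap.apply_sum_smul_sum_smul {R M N ι κ : Type*} [CommSemiring R]
    [AddCommMonoid M] [Module R M] [AddCommMonoid N] [Module R N] [Fintype ι] [Fintype κ]
    (B : M →ₗ[R] N →ₗ[R] R) (e : ι → M) (f : κ → N) (x : ι → R) (y : κ → R) :
    B (∑ k, x k • e k) (∑ l, y l • f l) = ∑ k, ∑ l, x k * y l * B (e k) (f l) := by
  simp only [map_sum, map_smul, LinearMap.coe_sum, Finset.sum_apply, LinearMap.smul_apply,
    smul_eq_mul, Finset.mul_sum, mul_assoc]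
  rw [Finset.sum_comm]
  exact Finset.sum_congr rfl fun _ _ => Finset.sum_congr rfl fun _ _ => mul_left_comm _ _ _

theorem Real.le_mul_exp_sub_div {T s : ℝ} (hT : 0 < T) (hs : s ≤ T) :
    T ≤ T * Real.exp ((T - s) / T) :=
  le_mul_of_one_le_right hT.le <| Real.one_le_exp <| div_nonneg (by linarith) hT.le

section CoefficientExpansion

variable {ι V : Type*} [Fintype ι] [AddCommGroup V] [Module ℝ V]
  (B : V →ₗ[ℝ] V →ₗ[ℝ] ℝ) (e : ι → V) {x y : ι → ℝ → ℝ}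

theorem continuous_apply_sum_smul_sum_smul (hx : ∀ k, Continuous (x k))
    (hy : ∀ l, Continuous (y l)) :
    Continuous fun s => B (∑ k, x k s • e k) (∑ l, y l s • e l) := by
  simp only [LinearMap.apply_sum_smul_sum_smul]
  fun_prop

theorem integral_apply_sum_smul_sum_smul (hx : ∀ k, Continuous (x k))
    (hy : ∀ l, Continuous (y l)) (b₀ b₁ : ℝ) :
    ∫ s in b₀..b₁, B (∑ k, x k s • e k) (∑ l, y l s • e l) =
      ∑ k, ∑ l, (∫ s in b₀..b₁, x k s * y l s) * B (e k) (e l) := by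
  simp only [LinearMap.apply_sum_smul_sum_smul]
  rw [integral_finsetSum fun k _ => (by fun_prop : Continuous _).intervalIntegrable _ _]
  refine Finset.sum_congr rfl fun k _ => ?_
  rw [integral_finsetSum fun l _ => (by fun_prop : Continuous _).intervalIntegrable _ _]
  exact Finset.sum_congr rfl fun l _ => integral_mul_const _ _

theorem integral_apply_sum_smul_eq_of_orthogonal {φ : ℝ → ℝ} (hφ : Continuous φ)
    (hx : ∀ k, Continuous (x k)) (hy : ∀ l, Continuous (y l)) {b₀ b₁ : ℝ}
    (horth : ∀ l k, ∫ s in b₀..b₁, (φ s * x l s - y l s) * x k s = 0) :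
    ∫ s in b₀..b₁, B (∑ k, x k s • e k) (∑ l, y l s • e l) =
      ∫ s in b₀..b₁, φ s * B (∑ k, x k s • e k) (∑ k, x k s • e k) := by
  have hweight : ∀ s, φ s * B (∑ k, x k s • e k) (∑ k, x k s • e k) =
      B (∑ k, x k s • e k) (∑ l, (φ s * x l s) • e l) := by
    intro s
    simp only [mul_smul, ← Finset.smul_sum, map_smul, smul_eq_mul]
  have hcoeff : ∀ k l, ∫ s in b₀..b₁, x k s * y l s = ∫ s in b₀..b₁, x k s * (φ s * x l s) := by
    intro k l
    have h := horth l k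
    simp only [sub_mul] at h
    rw [integral_sub ((by fun_prop : Continuous _).intervalIntegrable _ _)
      ((by fun_prop : Continuous _).intervalIntegrable _ _), sub_eq_zero] at h
    simp only [mul_comm (x k _)]
    exact h.symm
  simp only [hweight]
  rw [integral_apply_sum_smul_sum_smul B e hx hy,
    integral_apply_sum_smul_sum_smul B e (y := fun l s => φ s * x l s) hx fun l => hφ.mul (hx l)]
  simp only [hcoeff]

end CoefficientExpansion

theorem integral_weighted_coercive_le {ι V K : Type*} [Fintype ι] [AddCommGroup V] [Module ℝ V]
    [NormedAddCommGroup K] [NormedSpace ℝ K] (B : V →ₗ[ℝ] V →ₗ[ℝ] ℝ) (G : V →ₗ[ℝ] K)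
    {αs : ℝ} (hαs : 0 ≤ αs) (hB : ∀ v, αs * ‖G v‖ ^ 2 ≤ B v v) (e : ι → V)
    {x : ι → ℝ → ℝ} (hx : ∀ k, Continuous (x k)) {w : ℝ → ℝ} (hw : Continuous w)
    {b₀ b₁ c : ℝ} (hb : b₀ ≤ b₁) (hc : 0 ≤ c) (hcw : ∀ s ∈ Set.Icc b₀ b₁, c ≤ w s) :
    αs * c * ∫ s in b₀..b₁, ‖G (∑ k, x k s • e k)‖ ^ 2 ≤
      ∫ s in b₀..b₁, w s * B (∑ k, x k s • e k) (∑ k, x k s • e k) := by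
  rw [← integral_const_mul]
  refine integral_mono_on hb (Continuous.intervalIntegrable ?_ _ _)
    ((hw.mul (continuous_apply_sum_smul_sum_smul B e hx hx)).intervalIntegrable _ _)
    fun s hs => ?_
  · simp only [map_sum, map_smul]
    fun_prop
  · set u := ∑ k, x k s • e k
    have hG : 0 ≤ αs * ‖G u‖ ^ 2 := by positivity
    calc αs * c * ‖G u‖ ^ 2 = c * (αs * ‖G u‖ ^ 2) := by ring
      _ ≤ w s * B u u := mul_le_mul (hcw s hs) (hB u) hG (hc.trans (hcw s hs))

theorem diffusion_term_lower_bound_general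
    {V K : Type*} [AddCommGroup V] [Module ℝ V]
    [NormedAddCommGroup K] [InnerProductSpace ℝ K]
    (M : ℕ) (e : Module.Basis (Fin M) ℝ V) (G : V →ₗ[ℝ] K)
    (a : V →ₗ[ℝ] V →ₗ[ℝ] ℝ) (αs : ℝ) (hαs : 0 < αs)
    (ha : ∀ v : V, αs * ‖G v‖ ^ 2 ≤ a v v)
    (T : ℝ) (hT : 0 < T) (N : ℕ) (t : ℕ → ℝ)
    (htN : t N = T) (htmono : ∀ n < N, t n < t (n + 1))
    (r : ℕ) (α q : ℕ → Fin M → Polynomial ℝ)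
    (hα : ∀ n ℓ, (α n ℓ).natDegree ≤ r)
    (horth : ∀ n ∈ Finset.Icc 1 N, ∀ ℓ : Fin M, ∀ p : Polynomial ℝ, p.natDegree ≤ r →
      (∫ s in (t (n - 1))..(t n),
        (T * Real.exp ((T - s) / T) * (α n ℓ).eval s - (q n ℓ).eval s) * p.eval s) = 0)
    (θ ν : ℝ) (hθ : 0 < θ) (hν : 0 ≤ ν) :
    ν * αs * (T + θ) *
        (∑ n ∈ Finset.Icc 1 N,
          ∫ s in (t (n - 1))..(t n), ‖G (∑ ℓ, (α n ℓ).eval s • e ℓ)‖ ^ 2) ≤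
      ν * ∑ n ∈ Finset.Icc 1 N,
        ∫ s in (t (n - 1))..(t n),
          a (∑ ℓ, (α n ℓ).eval s • e ℓ)
            ((∑ ℓ, (q n ℓ).eval s • e ℓ) + θ • ∑ ℓ, (α n ℓ).eval s • e ℓ) := by
  have hmono : MonotoneOn t (Set.Iic N) :=
    monotoneOn_of_le_succ Set.ordConnected_Iic fun n _ _ hn => by
      rw [Order.succ_eq_add_one] at hn ⊢
      exact (htmono n hn).le
  rw [show ν * αs * (T + θ) = ν * (αs * (T + θ)) by ring, mul_assoc, Finset.mul_sum]
  refine mul_le_mul_of_nonneg_left (Finset.sum_le_sum fun n hn => ?_) hν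
  obtain ⟨hn₁, hnN⟩ := Finset.mem_Icc.mp hn
  have hslab : t (n - 1) ≤ t n := by
    simpa [Nat.sub_add_cancel hn₁] using (htmono (n - 1) (by omega)).le
  have hleT : t n ≤ T := htN ▸ hmono hnN Set.self_mem_Iic hnN
  -- `v` is the projection of `(φ_T + θ) u`, because the projection fixes `u`.
  have hv : ∀ s, ∑ ℓ, (q n ℓ).eval s • e ℓ + θ • ∑ ℓ, (α n ℓ).eval s • e ℓ =
      ∑ ℓ, ((q n ℓ).eval s + θ * (α n ℓ).eval s) • e ℓ := by
    intro s
    simp only [Finset.smul_sum, smul_smul, add_smul, Finset.sum_add_distrib]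
  simp only [hv]
  rw [integral_apply_sum_smul_eq_of_orthogonal a e
    (φ := fun s => T * Real.exp ((T - s) / T) + θ) (by fun_prop) (fun _ => by fun_prop)
    (fun _ => by fun_prop) fun ℓ k => by
      rw [← horth n hn ℓ (α n k) (hα n k)]
      congr 1 with s
      ring]
  exact integral_weighted_coercive_le a G hαs.le ha e (fun _ => by fun_prop) (by fun_prop) hslab
    (by positivity) fun s hs => by
      linarith [Real.le_mul_exp_sub_div hT (hs.2.trans hleT)]

/-- Abstract lower bound for the diffusion term tested with the nonstandard test
function `v = Π_r(φ_T u) + θ u`, where `Π_r` is the componentwise time-slab-wise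
`L²`-orthogonal projection onto polynomials of degree at most `r` and
`φ_T(t) = T exp((T-t)/T)`. -/
theorem diffusion_term_lower_bound
    {V K : Type*} [AddCommGroup V] [Module ℝ V] [FiniteDimensional ℝ V]
    [NormedAddCommGroup K] [InnerProductSpace ℝ K]
    (M : ℕ) (e : Module.Basis (Fin M) ℝ V) (G : V →ₗ[ℝ] K)
    (a : V →ₗ[ℝ] V →ₗ[ℝ] ℝ) (αs : ℝ) (hαs : 0 < αs)
    (ha : ∀ v : V, αs * ‖G v‖ ^ 2 ≤ a v v)
    (T : ℝ) (hT : 0 < T) (N : ℕ) (hN : 1 ≤ N) (t : ℕ → ℝ)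
    (ht0 : t 0 = 0) (htN : t N = T) (htmono : ∀ n < N, t n < t (n + 1))
    (r : ℕ) (α q : ℕ → Fin M → Polynomial ℝ)
    (hα : ∀ n ℓ, (α n ℓ).natDegree ≤ r) (hq : ∀ n ℓ, (q n ℓ).natDegree ≤ r)
    (horth : ∀ n ∈ Finset.Icc 1 N, ∀ ℓ : Fin M, ∀ p : Polynomial ℝ, p.natDegree ≤ r →
      (∫ s in (t (n - 1))..(t n),
        (T * Real.exp ((T - s) / T) * (α n ℓ).eval s - (q n ℓ).eval s) * p.eval s) = 0)
    (θ ν : ℝ) (hθ : 0 < θ) (hν : 0 ≤ ν) :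
    ν * αs * (T + θ) *
        (∑ n ∈ Finset.Icc 1 N,
          ∫ s in (t (n - 1))..(t n), ‖G (∑ ℓ, (α n ℓ).eval s • e ℓ)‖ ^ 2) ≤
      ν * ∑ n ∈ Finset.Icc 1 N,
        ∫ s in (t (n - 1))..(t n),
          a (∑ ℓ, (α n ℓ).eval s • e ℓ)
            ((∑ ℓ, (q n ℓ).eval s • e ℓ) + θ • ∑ ℓ, (α n ℓ).eval s • e ℓ) :=
  diffusion_term_lower_bound_general M e G a αs hαs ha T hT N t htN htmono r α q hα horth θ ν hθ hν
end
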